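/- Relation between the quaternion quadratic phase ambiguity function and the STQQPFT: (A^{∧₁,∧₂}_ℍ(f,g))(x,ξ) = φ^i_{∧₁,-1/2}(x₁,ξ₁) · (S^{∧₁,∧₂}_{ℍ,g} f)(x, ξ'_x) · φ^j_{∧₂,-1/2}(x₂,ξ₂), where ξ'_x = (ξ₁ - A₁x₁/B₁, ξ₂ - A₂x₂/B₂). In particular |(A^{∧₁,∧₂}_ℍ(f,g))(x,ξ)| = |(S^{∧₁,∧₂}_{ℍ,g} f)(x,ξ'_x)|. -/

import Mathlib

open MeasureTheory Real
open scoped ENNReal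

noncomputable section

/-- The real quaternions. -/
abbrev ℍ := Quaternion ℝ

/-- The quaternion imaginary unit `i`. -/
def qi : ℍ := ⟨0, 1, 0, 0⟩

/-- The quaternion imaginary unit `j`. -/
def qj : ℍ := ⟨0, 0, 1, 0⟩

/-- Exponential in the quaternions. -/
def qexp (q : ℍ) : ℍ := NormedSpace.exp q

/-- A parameter tuple `∧ = (A,B,C,D,E)` with `B ≠ 0` for quadratic phase transforms. -/
structure QPParams where
  A : ℝ
  B : ℝ
  C : ℝ
  D : ℝ
  E : ℝ
  hB : B ≠ 0

/-- The QQPFT kernel with imaginary unit `i`. -/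
def KerI (L : QPParams) (t ξ : ℝ) : ℍ :=
  (1 / Real.sqrt (2 * π)) •
    qexp (-(L.A * t ^ 2 + L.B * t * ξ + L.C * ξ ^ 2 + L.D * t + L.E * ξ) • qi)

/-- The QQPFT kernel with imaginary unit `j`. -/
def KerJ (L : QPParams) (t ξ : ℝ) : ℍ :=
  (1 / Real.sqrt (2 * π)) •
    qexp (-(L.A * t ^ 2 + L.B * t * ξ + L.C * ξ ^ 2 + L.D * t + L.E * ξ) • qj)

/-- The two-sided quaternion quadratic phase Fourier transform. -/
def QQPFT (L1 L2 : QPParams) (f : ℝ × ℝ → ℍ) (ξ : ℝ × ℝ) : ℍ :=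
  ∫ t : ℝ × ℝ, KerI L1 t.1 ξ.1 * f t * KerJ L2 t.2 ξ.2

/-- The two-sided quaternion Fourier transform. -/
def QFT (f : ℝ × ℝ → ℍ) (ξ : ℝ × ℝ) : ℍ :=
  ∫ t : ℝ × ℝ, ((1 / Real.sqrt (2 * π)) • qexp (-(t.1 * ξ.1) • qi)) * f t *
    ((1 / Real.sqrt (2 * π)) • qexp (-(t.2 * ξ.2) • qj))

/-- The short time quaternion quadratic phase Fourier transform with window `g`. -/
def STQQPFT (L1 L2 : QPParams) (g f : ℝ × ℝ → ℍ) (x ξ : ℝ × ℝ) : ℍ :=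
  ∫ t : ℝ × ℝ, KerI L1 t.1 ξ.1 * (f t * star (g (t - x))) * KerJ L2 t.2 ξ.2

/-- The symmetric real scalar inner product `⟨f,g⟩ = ∫ Sc[f ḡ]`. -/
def scInner (f g : ℝ × ℝ → ℍ) : ℝ := ∫ x : ℝ × ℝ, (f x * star (g x)).re

/-- The phase factor `φ^i_{∧,r}(k,ξ)`. -/
def phiI (L : QPParams) (r k ξ : ℝ) : ℍ :=
  qexp (-(L.A * r ^ 2 * k ^ 2 + L.D * r * k + L.B * r * k * ξ
      - 4 * r ^ 2 * L.A ^ 2 * L.C * k ^ 2 / L.B ^ 2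
      - 4 * r * L.A * L.C * k * ξ / L.B - 2 * r * L.A * L.E * k / L.B) • qi)

/-- The phase factor `φ^j_{∧,r}(k,ξ)`. -/
def phiJ (L : QPParams) (r k ξ : ℝ) : ℍ :=
  qexp (-(L.A * r ^ 2 * k ^ 2 + L.D * r * k + L.B * r * k * ξ
      - 4 * r ^ 2 * L.A ^ 2 * L.C * k ^ 2 / L.B ^ 2
      - 4 * r * L.A * L.C * k * ξ / L.B - 2 * r * L.A * L.E * k / L.B) • qj)

/-- The two-sided quaternion quadratic phase ambiguity function. -/
def QQPAF (L1 L2 : QPParams) (f g : ℝ × ℝ → ℍ) (x ξ : ℝ × ℝ) : ℍ :=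
  ∫ t : ℝ × ℝ, KerI L1 t.1 ξ.1 *
    (f (t + (1 / 2 : ℝ) • x) * star (g (t - (1 / 2 : ℝ) • x))) * KerJ L2 t.2 ξ.2

/-!
Substituting `t ↦ t - x / 2` turns the ambiguity integrand into the short-time integrand with
the kernels evaluated at `t - x / 2`. Expanding the quadratic phase there and completing the
square in `ξ` splits it into the phase at `t` with the frequency shifted by `A x / B` plus a
`t`-independent phase, which is `φ_{∧,-1/2}(x, ξ)`. As the `i`-kernel stands left and the
`j`-kernel right of the integrand, these unimodular factors leave the integral on those sides,
so the non-commutativity of `ℍ` does no harm.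
-/

lemma qexp_add_smul (u : ℍ) (a b : ℝ) : qexp ((a + b) • u) = qexp (a • u) * qexp (b • u) := by
  let : NormedAlgebra ℚ ℍ := .restrictScalars ℚ ℝ ℍ
  rw [qexp, qexp, qexp, add_smul]
  exact NormedSpace.exp_add_of_commute (((Commute.refl u).smul_left a).smul_right b)

lemma norm_qexp_smul_of_re_eq_zero {u : ℍ} (hu : u.re = 0) (a : ℝ) : ‖qexp (a • u)‖ = 1 := by
  simp [qexp, Quaternion.norm_exp, hu]

lemma integral_const_mul_mul_const {α 𝕜 : Type*} [MeasurableSpace α] {μ : Measure α}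
    [NormedDivisionRing 𝕜] [NormedAlgebra ℝ 𝕜] [CompleteSpace 𝕜] (a b : 𝕜) (F : α → 𝕜) :
    ∫ t, a * F t * b ∂μ = a * (∫ t, F t ∂μ) * b := by
  rcases eq_or_ne a 0 with rfl | ha
  · simp
  rcases eq_or_ne b 0 with rfl | hb
  · simp
  by_cases hF : Integrable F μ
  · rw [integral_mul_const_of_integrable (hF.const_mul a), integral_const_mul_of_integrable hF]
  · have hF' : ¬Integrable (fun t => a * F t * b) μ := by
      rwa [integrable_mul_const_iff hb.isUnit, integrable_const_mul_iff ha.isUnit]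
    rw [integral_undef hF, integral_undef hF', mul_zero, zero_mul]

lemma quadPhase_sub_half (L : QPParams) (t x ξ : ℝ) :
    L.A * (t - x / 2) ^ 2 + L.B * (t - x / 2) * ξ + L.C * ξ ^ 2 + L.D * (t - x / 2) + L.E * ξ =
      (L.A * (-(1 / 2)) ^ 2 * x ^ 2 + L.D * (-(1 / 2)) * x + L.B * (-(1 / 2)) * x * ξ
        - 4 * (-(1 / 2)) ^ 2 * L.A ^ 2 * L.C * x ^ 2 / L.B ^ 2
        - 4 * (-(1 / 2)) * L.A * L.C * x * ξ / L.B - 2 * (-(1 / 2)) * L.A * L.E * x / L.B) +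
      (L.A * t ^ 2 + L.B * t * (ξ - L.A * x / L.B) + L.C * (ξ - L.A * x / L.B) ^ 2 + L.D * t
        + L.E * (ξ - L.A * x / L.B)) := by
  have hB := L.hB
  field_simp
  ring

lemma kerI_sub_half (L : QPParams) (t x ξ : ℝ) :
    KerI L (t - x / 2) ξ = phiI L (-(1 / 2)) x ξ * KerI L t (ξ - L.A * x / L.B) := by
  rw [KerI, KerI, phiI, mul_smul_comm, ← qexp_add_smul, quadPhase_sub_half, neg_add]

lemma kerJ_sub_half (L : QPParams) (t x ξ : ℝ) :
    KerJ L (t - x / 2) ξ = KerJ L t (ξ - L.A * x / L.B) * phiJ L (-(1 / 2)) x ξ := by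
  rw [KerJ, KerJ, phiJ, smul_mul_assoc, ← qexp_add_smul, quadPhase_sub_half, neg_add, add_comm]

lemma QQPAF_eq_integral_sub_half (L1 L2 : QPParams) (f g : ℝ × ℝ → ℍ) (x ξ : ℝ × ℝ) :
    QQPAF L1 L2 f g x ξ = ∫ t : ℝ × ℝ,
      KerI L1 (t.1 - x.1 / 2) ξ.1 * (f t * star (g (t - x))) * KerJ L2 (t.2 - x.2 / 2) ξ.2 := by
  rw [QQPAF, ← integral_sub_right_eq_self _ ((1 / 2 : ℝ) • x)]
  congr 1; funext t
  rw [sub_add_cancel, show t - (1 / 2 : ℝ) • x - (1 / 2 : ℝ) • x = t - x by module]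
  congr 3 <;>
    simp only [Prod.fst_sub, Prod.snd_sub, Prod.smul_fst, Prod.smul_snd, smul_eq_mul] <;> ring

theorem qqpaf_eq_stqqpft_general (L1 L2 : QPParams) (g f : ℝ × ℝ → ℍ)
    (x ξ : ℝ × ℝ) :
    QQPAF L1 L2 f g x ξ =
      phiI L1 (-(1 / 2)) x.1 ξ.1 *
        STQQPFT L1 L2 g f x (ξ.1 - L1.A * x.1 / L1.B, ξ.2 - L2.A * x.2 / L2.B) *
        phiJ L2 (-(1 / 2)) x.2 ξ.2 ∧
    ‖QQPAF L1 L2 f g x ξ‖ =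
      ‖STQQPFT L1 L2 g f x (ξ.1 - L1.A * x.1 / L1.B, ξ.2 - L2.A * x.2 / L2.B)‖ := by
  have key : QQPAF L1 L2 f g x ξ =
      phiI L1 (-(1 / 2)) x.1 ξ.1 *
        STQQPFT L1 L2 g f x (ξ.1 - L1.A * x.1 / L1.B, ξ.2 - L2.A * x.2 / L2.B) *
        phiJ L2 (-(1 / 2)) x.2 ξ.2 := by
    simp only [QQPAF_eq_integral_sub_half, kerI_sub_half, kerJ_sub_half, STQQPFT, ← mul_assoc,
      ← integral_const_mul_mul_const]
  refine ⟨key, ?_⟩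
  rw [key, norm_mul, norm_mul, phiI, phiJ, norm_qexp_smul_of_re_eq_zero rfl,
    norm_qexp_smul_of_re_eq_zero rfl, one_mul, mul_one]

/-- relation between the QQPAF and the STQQPFT. -/
theorem qqpaf_eq_stqqpft (L1 L2 : QPParams) (g f : ℝ × ℝ → ℍ)
    (hg2 : MemLp g 2 volume) (hgi : MemLp g ⊤ volume) (hf : MemLp f 2 volume)
    (x ξ : ℝ × ℝ) :
    QQPAF L1 L2 f g x ξ =
      phiI L1 (-(1 / 2)) x.1 ξ.1 *
        STQQPFT L1 L2 g f x (ξ.1 - L1.A * x.1 / L1.B, ξ.2 - L2.A * x.2 / L2.B) *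
        phiJ L2 (-(1 / 2)) x.2 ξ.2 ∧
    ‖QQPAF L1 L2 f g x ξ‖ =
      ‖STQQPFT L1 L2 g f x (ξ.1 - L1.A * x.1 / L1.B, ξ.2 - L2.A * x.2 / L2.B)‖ :=
  qqpaf_eq_stqqpft_general L1 L2 g f x ξ
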